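/- Let G be a finite simple graph and let W be a non-empty module of G such that W is a clique and such that any two distinct max cliques of G that intersect W have different intersections with W (i.e. if C ≠ C' are max cliques with C ∩ W ≠ ∅ and C' ∩ W ≠ ∅, then C ∩ W ≠ C' ∩ W). Then there is exactly one max clique C of G with C ∩ W ≠ ∅. -/

import Mathlib

/-! A max clique meeting a clique module `W` can be enlarged by all of `W`, since every vertex
outside `W` that is adjacent to one vertex of `W` is adjacent to all of them; hence every such max
clique contains `W` and meets it in `W` itself. By the distinctness hypothesis there is at most one
of them, and a max clique containing the non-empty clique `W` exists by Zorn's lemma. -/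

/-- A max clique: an inclusion-maximal clique. -/
def IsMaxClique {V : Type} (G : SimpleGraph V) (s : Set V) : Prop :=
  G.IsClique s ∧ ∀ t : Set V, G.IsClique t → s ⊆ t → t = s

/-- A module of `G`: a set `W` of vertices such that every vertex outside `W` is
adjacent either to all vertices of `W` or to none of them. -/
def IsModule {V : Type} (G : SimpleGraph V) (W : Set V) : Prop :=
  ∀ v : V, v ∉ W → (∀ w ∈ W, G.Adj v w) ∨ (∀ w ∈ W, ¬ G.Adj v w)

section

variable {V : Type} {G : SimpleGraph V} {C W : Set V}

lemma isMaxClique_iff_maximal {s : Set V} : IsMaxClique G s ↔ Maximal G.IsClique s := by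
  rw [SimpleGraph.isMaximalClique_iff]
  exact and_congr_right fun _ ↦ forall₃_congr fun t _ hst ↦
    ⟨fun h ↦ (h.symm ▸ subset_rfl), fun h ↦ h.antisymm hst⟩

lemma exists_isMaxClique_superset {s : Set V} (hs : G.IsClique s) :
    ∃ C, s ⊆ C ∧ IsMaxClique G C := by
  obtain ⟨C, hsC, hC⟩ := zorn_subset_nonempty {t | G.IsClique t}
    (fun c hc hchain _ ↦ ⟨⋃₀ c, (SimpleGraph.isClique_sUnion hchain.directedOn).mpr hc,
      fun _ ↦ Set.subset_sUnion_of_mem⟩) s hs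
  exact ⟨C, hsC, isMaxClique_iff_maximal.mpr hC⟩

lemma IsModule.adj_of_adj {v w w' : V} (hW : IsModule G W) (hv : v ∉ W) (hw : w ∈ W)
    (hw' : w' ∈ W) (hadj : G.Adj v w) : G.Adj v w' :=
  (hW v hv).elim (· w' hw') fun h ↦ absurd hadj (h w hw)

lemma IsModule.isClique_union (hW : IsModule G W) (hWcl : G.IsClique W) (hC : G.IsClique C)
    (hCW : (C ∩ W).Nonempty) : G.IsClique (C ∪ W) := by
  obtain ⟨u, huC, huW⟩ := hCW
  have cross : ∀ ⦃x y⦄, x ∈ C → y ∈ W → x ≠ y → G.Adj x y := by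
    intro x y hx hy hxy
    by_cases hxW : x ∈ W
    · exact hWcl hxW hy hxy
    · exact hW.adj_of_adj hxW huW hy (hC hx huC fun h ↦ hxW (h ▸ huW))
  rintro x (hx | hx) y (hy | hy) hxy
  · exact hC hx hy hxy
  · exact cross hx hy hxy
  · exact (cross hy hx hxy.symm).symm
  · exact hWcl hx hy hxy

lemma IsModule.inter_eq_of_isMaxClique (hW : IsModule G W) (hWcl : G.IsClique W)
    (hC : IsMaxClique G C) (hCW : (C ∩ W).Nonempty) : C ∩ W = W := by
  have hunion := hC.2 _ (hW.isClique_union hWcl hC.1 hCW) Set.subset_union_left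
  exact Set.inter_eq_right.mpr (hunion ▸ Set.subset_union_right)

end

theorem clique_module_unique_maxClique_general {V : Type} (G : SimpleGraph V)
    (W : Set V) (hW : IsModule G W) (hne : W.Nonempty) (hcl : G.IsClique W)
    (hdist : ∀ C C' : Set V, IsMaxClique G C → IsMaxClique G C' → C ≠ C' →
      (C ∩ W).Nonempty → (C' ∩ W).Nonempty → C ∩ W ≠ C' ∩ W) :
    ∃! C : Set V, IsMaxClique G C ∧ (C ∩ W).Nonempty := by
  obtain ⟨M, hWM, hM⟩ := exists_isMaxClique_superset hcl
  have hMW : (M ∩ W).Nonempty := by simpa [Set.inter_eq_right.mpr hWM] using hne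
  refine ⟨M, ⟨hM, hMW⟩, fun C ⟨hC, hCW⟩ ↦ ?_⟩
  by_contra hCM
  exact hdist C M hC hM hCM hCW hMW
    ((hW.inter_eq_of_isMaxClique hcl hC hCW).trans (hW.inter_eq_of_isMaxClique hcl hM hMW).symm)

/-- Let `W` be a non-empty module of the finite simple graph `G`
which is a clique, and suppose any two distinct max cliques of `G` that intersect `W`
have different intersections with `W`.  Then there is exactly one max clique `C` of
`G` with `C ∩ W ≠ ∅`. -/
theorem clique_module_unique_maxClique {V : Type} [Fintype V] (G : SimpleGraph V)
    (W : Set V) (hW : IsModule G W) (hne : W.Nonempty) (hcl : G.IsClique W)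
    (hdist : ∀ C C' : Set V, IsMaxClique G C → IsMaxClique G C' → C ≠ C' →
      (C ∩ W).Nonempty → (C' ∩ W).Nonempty → C ∩ W ≠ C' ∩ W) :
    ∃! C : Set V, IsMaxClique G C ∧ (C ∩ W).Nonempty :=
  clique_module_unique_maxClique_general G W hW hne hcl hdist
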